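/- arXiv:2501.03579 — 2 statements merged into one kernel-verified Lean document; each statement's English description precedes it below -/
import Mathlib

section
/- Let C be a chain complex of modules over a commutative ring R, and let u, v be elements of R such that multiplication by u and multiplication by v on C are chain homotopic chain maps. Then the map induced by multiplication by v on the homology of the quotient complex C/(u·C) is the zero map. -/
open CategoryTheory CategoryTheory.Limits HomologicalComplex

section Aux

variable (R : Type) [CommRing R]
    (C : CochainComplex (ModuleCat R) ℤ) (u v : R)

lemma aux_cond (i : ℤ) :
    (u • 𝟙 C).f i ≫ (cokernel.π (u • 𝟙 C)).f i = 0 := by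
  rw [← HomologicalComplex.comp_f, cokernel.condition]
  rfl

noncomputable def auxIsColim (i : ℤ) :
    IsColimit (CokernelCofork.ofπ ((cokernel.π (u • 𝟙 C)).f i) (aux_cond R C u i) :
      Cofork ((u • 𝟙 C).f i) 0) :=
  isColimitOfHasCokernelOfPreservesColimit
    (HomologicalComplex.eval (ModuleCat R) (ComplexShape.up ℤ) i) (u • 𝟙 C)

lemma aux_smul_pi_zero (j : ℤ) : u • (cokernel.π (u • 𝟙 C)).f j = 0 := by
  have := aux_cond R C u j
  rwa [HomologicalComplex.smul_f_apply, HomologicalComplex.id_f,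
    Linear.smul_comp, Category.id_comp] at this

lemma aux_desc_cond (H : Homotopy (u • 𝟙 C) (v • 𝟙 C)) (i j : ℤ) :
    (u • 𝟙 C).f i ≫ H.hom i j ≫ (cokernel.π (u • 𝟙 C)).f j = 0 := by
  rw [HomologicalComplex.smul_f_apply, HomologicalComplex.id_f,
    Linear.smul_comp, Category.id_comp, ← Linear.comp_smul,
    aux_smul_pi_zero, comp_zero]

/-- The homotopy descended to the cokernel complex. -/
noncomputable def descHomotopy (H : Homotopy (u • 𝟙 C) (v • 𝟙 C)) :
    Homotopy (u • 𝟙 (cokernel (u • 𝟙 C) : CochainComplex (ModuleCat R) ℤ))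
      (v • 𝟙 (cokernel (u • 𝟙 C) : CochainComplex (ModuleCat R) ℤ)) where
  hom i j := (CokernelCofork.IsColimit.desc' (auxIsColim R C u i)
      (H.hom i j ≫ (cokernel.π (u • 𝟙 C)).f j) (aux_desc_cond R C u v H i j)).1
  zero i j hij := by
    rw [← cancel_epi ((cokernel.π (u • 𝟙 C)).f i), comp_zero]
    have := (CokernelCofork.IsColimit.desc' (auxIsColim R C u i)
      (H.hom i j ≫ (cokernel.π (u • 𝟙 C)).f j) (aux_desc_cond R C u v H i j)).2
    simp only [Cofork.π_ofπ] at this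
    rw [this, H.zero i j hij, zero_comp]
  comm i := by
    rw [← cancel_epi ((cokernel.π (u • 𝟙 C)).f i)]
    have hπ : ∀ j k, (cokernel.π (u • 𝟙 C)).f j ≫
        (CokernelCofork.IsColimit.desc' (auxIsColim R C u j)
          (H.hom j k ≫ (cokernel.π (u • 𝟙 C)).f k) (aux_desc_cond R C u v H j k)).1
        = H.hom j k ≫ (cokernel.π (u • 𝟙 C)).f k := fun j k =>
      (CokernelCofork.IsColimit.desc' (auxIsColim R C u j)
          (H.hom j k ≫ (cokernel.π (u • 𝟙 C)).f k) (aux_desc_cond R C u v H j k)).2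
    have hrel1 : (ComplexShape.up ℤ).Rel i (i + 1) := by simp
    have hrel2 : (ComplexShape.up ℤ).Rel (i - 1) i := by simp
    rw [dNext_eq _ hrel1, prevD_eq _ hrel2]
    have hcomm := H.comm i
    rw [dNext_eq _ hrel1, prevD_eq _ hrel2] at hcomm
    simp only [Preadditive.comp_add]
    rw [(cokernel.π (u • 𝟙 C)).comm_assoc i (i + 1), hπ (i + 1) i]
    rw [reassoc_of% (hπ i (i - 1))]
    rw [(cokernel.π (u • 𝟙 C)).comm (i - 1) i]
    -- smul parts
    have hsm : ∀ (w : R), (cokernel.π (u • 𝟙 C)).f i ≫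
        (w • 𝟙 (cokernel (u • 𝟙 C) : CochainComplex (ModuleCat R) ℤ)).f i
        = (w • 𝟙 C).f i ≫ (cokernel.π (u • 𝟙 C)).f i := by
      intro w
      rw [HomologicalComplex.smul_f_apply, HomologicalComplex.id_f,
        HomologicalComplex.smul_f_apply, HomologicalComplex.id_f,
        Linear.comp_smul, Category.comp_id, Linear.smul_comp, Category.id_comp]
    rw [hsm u, hsm v, hcomm]
    simp only [Preadditive.add_comp, Category.assoc]

end Aux

/-- If multiplication by `u` and by `v` on a chain complex `C` of `R`-modules are chain
homotopic, then multiplication by `v` induces the zero map on the homology of the quotient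
complex `C/uC` (realized as the cokernel of the chain map `u • 𝟙 C`). -/
theorem mul_induces_zero_on_quotient_homology
    (R : Type) [CommRing R]
    (C : CochainComplex (ModuleCat R) ℤ) (u v : R)
    (h : Nonempty (Homotopy (u • 𝟙 C) (v • 𝟙 C))) :
    ∀ i : ℤ,
      HomologicalComplex.homologyMap
        (v • 𝟙 (cokernel (u • 𝟙 C) : CochainComplex (ModuleCat R) ℤ)) i = 0 := by
  intro i
  obtain ⟨H⟩ := h
  have hzero : (u • 𝟙 (cokernel (u • 𝟙 C) : CochainComplex (ModuleCat R) ℤ)) = 0 := by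
    rw [← cancel_epi (cokernel.π (u • 𝟙 C)), comp_zero, Linear.comp_smul, Category.comp_id,
      ← Category.id_comp (cokernel.π (u • 𝟙 C)), ← Linear.smul_comp, cokernel.condition]
  have := (descHomotopy R C u v H).symm.homologyMap_eq i
  rw [this, hzero, HomologicalComplex.homologyMap_zero]
end

section
/- Let Z and Y be chain complexes over a commutative ring R, let Φ_B: Z -> Y and Φ_A: Y -> Z be chain maps, and let u ∈ R be such that Φ_A∘Φ_B equals multiplication by u on Z. Consider the square with top map Φ_B: Z -> Y, right map Φ_A: Y -> Z, left map multiplication by u: Z -> Z, and bottom map the identity Z -> Z; this square commutes. Then the total complex T of this square (the iterated mapping cone) admits two filtrations: one exhibiting T as quasi-isomorphic to Cone(Φ_B) (since Cone(id_Z) is acyclic), and one exhibiting an exact triangle in homology ... -> H(Cone(u: Z -> Z)) -> H(T) -> H(Cone(Φ_A)) -> H(Cone(u))[-1] -> ... . Consequently there is a long exact sequence ... -> H(Cone(Φ_B)) -> H(Z/uZ) -> H(Cone(Φ_A)) -> H(Cone(Φ_B))[-1] -> ... whenever u is a non-zero-divisor on Z so that H(Cone(u)) ≅ H(Z/uZ).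 -/
open CategoryTheory CategoryTheory.Limits
open CategoryTheory.Pretriangulated

/-- Skein exact sequence, abstract form.  Let `Φ_B : Z ⟶ Y` and `Φ_A : Y ⟶ Z` be chain maps
with `Φ_A ∘ Φ_B` equal to multiplication by `u` on `Z`, and suppose `u` is a
non-zero-divisor on `Z`.  Then there is a long exact sequence
`… → H(Cone Φ_B) → H(Z/uZ) → H(Cone Φ_A) → H(Cone Φ_B)[1] → …`,
where `Z/uZ` is realized as the cokernel of the chain map `u • 𝟙 Z`. -/
theorem skein_long_exact_sequence
    (R : Type) [CommRing R]
    (Z Y : CochainComplex (ModuleCat R) ℤ)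
    (ΦB : Z ⟶ Y) (ΦA : Y ⟶ Z) (u : R)
    (hcomp : ΦB ≫ ΦA = u • 𝟙 Z)
    (hreg : ∀ (i : ℤ) (z : Z.X i), u • z = 0 → z = 0) :
    ∃ (α : ∀ n : ℤ, (CochainComplex.mappingCone ΦB).homology n ⟶
            (cokernel (u • 𝟙 Z) : CochainComplex (ModuleCat R) ℤ).homology n)
      (β : ∀ n : ℤ, (cokernel (u • 𝟙 Z) : CochainComplex (ModuleCat R) ℤ).homology n ⟶
            (CochainComplex.mappingCone ΦA).homology n)
      (δ : ∀ n : ℤ, (CochainComplex.mappingCone ΦA).homology n ⟶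
            (CochainComplex.mappingCone ΦB).homology (n + 1)),
      ∀ n : ℤ,
        (∃ w, (ShortComplex.mk (α n) (β n) w).Exact) ∧
        (∃ w, (ShortComplex.mk (β n) (δ n) w).Exact) ∧
        (∃ w, (ShortComplex.mk (δ n) (α (n + 1)) w).Exact) := by
  classical
  -- the short exact sequence `0 → Z → Z → Z/uZ → 0`
  have hmono : Mono (u • 𝟙 Z) := by
    constructor
    intro W a b hab
    ext i x
    have h := congrArg (fun (φ : W ⟶ Z) => (φ.f i) x) hab
    simp only [HomologicalComplex.comp_f, HomologicalComplex.smul_f_apply,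
      HomologicalComplex.id_f, ModuleCat.hom_comp, LinearMap.comp_apply, ModuleCat.hom_smul, ModuleCat.hom_id,
      LinearMap.smul_apply, LinearMap.id_apply] at h
    exact sub_eq_zero.mp (hreg i _ (by rw [smul_sub, sub_eq_zero]; exact h))
  set S : ShortComplex (CochainComplex (ModuleCat R) ℤ) :=
    ShortComplex.mk (u • 𝟙 Z) (cokernel.π (u • 𝟙 Z)) (cokernel.condition _) with hS_def
  have hS : S.ShortExact :=
    { exact := S.exact_of_g_is_cokernel (cokernelIsCokernel _)
      mono_f := hmono
      epi_g := coequalizer.π_epi }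
  have hq : QuasiIso (CochainComplex.mappingCone.descShortComplex S) :=
    CochainComplex.mappingCone.quasiIso_descShortComplex hS
  -- the octahedron attached to `ΦB ≫ ΦA = u • 𝟙 Z`
  let q := HomotopyCategory.quotient (ModuleCat R) (ComplexShape.up ℤ)
  have comm : q.map ΦB ≫ q.map ΦA = q.map (u • 𝟙 Z) := by
    rw [← q.map_comp, hcomp]
  let oct := Triangulated.someOctahedron comm
    (HomotopyCategory.mappingCone_triangleh_distinguished ΦB)
    (HomotopyCategory.mappingCone_triangleh_distinguished ΦA)
    (HomotopyCategory.mappingCone_triangleh_distinguished (u • 𝟙 Z))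
  set T : Pretriangulated.Triangle (HomotopyCategory (ModuleCat R) (ComplexShape.up ℤ)) :=
    Pretriangulated.Triangle.mk oct.m₁ oct.m₃
      ((CochainComplex.mappingCone.triangleh ΦA).mor₃ ≫
        (CochainComplex.mappingCone.triangleh ΦB).mor₂⟦(1 : ℤ)⟧') with hT_def
  have hT : T ∈ distTriang (HomotopyCategory (ModuleCat R) (ComplexShape.up ℤ)) := oct.mem
  -- the homology functor on the homotopy category
  let F := HomotopyCategory.homologyFunctor (ModuleCat R) (ComplexShape.up ℤ) 0
  -- identifications of homology objects
  let eB : ∀ n : ℤ, (F.shift n).obj T.obj₁ ≅ (CochainComplex.mappingCone ΦB).homology n :=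
    fun n => (HomotopyCategory.homologyFunctorFactors (ModuleCat R)
      (ComplexShape.up ℤ) n).app (CochainComplex.mappingCone ΦB)
  let eu : ∀ n : ℤ, (F.shift n).obj T.obj₂ ≅
      (cokernel (u • 𝟙 Z) : CochainComplex (ModuleCat R) ℤ).homology n :=
    fun n => (HomotopyCategory.homologyFunctorFactors (ModuleCat R)
      (ComplexShape.up ℤ) n).app (CochainComplex.mappingCone (u • 𝟙 Z)) ≪≫
      @asIso _ _ _ _ (HomologicalComplex.homologyMap (CochainComplex.mappingCone.descShortComplex S) n)
        ((quasiIsoAt_iff_isIso_homologyMap _ n).mp inferInstance)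
  let eA : ∀ n : ℤ, (F.shift n).obj T.obj₃ ≅ (CochainComplex.mappingCone ΦA).homology n :=
    fun n => (HomotopyCategory.homologyFunctorFactors (ModuleCat R)
      (ComplexShape.up ℤ) n).app (CochainComplex.mappingCone ΦA)
  refine ⟨fun n => (eB n).inv ≫ (F.shift n).map T.mor₁ ≫ (eu n).hom,
    fun n => (eu n).inv ≫ (F.shift n).map T.mor₂ ≫ (eA n).hom,
    fun n => (eA n).inv ≫ F.homologySequenceδ T n (n + 1) rfl ≫ (eB (n + 1)).hom,
    fun n => ⟨⟨?_, ?_⟩, ⟨?_, ?_⟩, ⟨?_, ?_⟩⟩⟩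
  · simp only [Category.assoc, Iso.hom_inv_id_assoc]
    rw [F.homologySequence_comp_assoc T hT n]
    simp
  · refine ShortComplex.exact_of_iso ?_ (F.homologySequence_exact₂ T hT n)
    exact ShortComplex.isoMk (eB n) (eu n) (eA n) (by simp) (by simp)
  · simp only [Category.assoc, Iso.hom_inv_id_assoc]
    rw [F.comp_homologySequenceδ_assoc T hT n (n + 1) rfl]
    simp
  · refine ShortComplex.exact_of_iso ?_ (F.homologySequence_exact₃ T hT n (n + 1) rfl)
    exact ShortComplex.isoMk (eu n) (eA n) (eB (n + 1)) (by simp) (by simp)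
  · simp only [Category.assoc, Iso.hom_inv_id_assoc]
    rw [F.homologySequenceδ_comp_assoc T hT n (n + 1) rfl]
    simp
  · refine ShortComplex.exact_of_iso ?_ (F.homologySequence_exact₁ T hT n (n + 1) rfl)
    exact ShortComplex.isoMk (eA n) (eB (n + 1)) (eu (n + 1)) (by simp) (by simp)
end
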